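/- Reduced-cipher encryption: for a message μ, public key A ∈ ℤ_q^{m×(n+1)}, and randomness R ∈ {0,1}^{N×m}, the reduced cipher of the Gentry encryption C = [(μ·I_N + [R·A]^ℓ) · G_{n+1}]^ℓ equals (μ·G_{n+1} + R·A)^ℓ. -/
import Mathlib

open Matrix

def gadget (R : Type*) [Semiring R] (n ℓ : ℕ) : Matrix (Fin n × Fin ℓ) (Fin n) R :=
  fun p k => if p.1 = k then 2 ^ (p.2 : ℕ) else 0

def bitDecomp {ρ : Type*} (n ℓ : ℕ) (a : Matrix ρ (Fin n) ℕ) :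
    Matrix ρ (Fin n × Fin ℓ) ℕ :=
  fun r p => ((a r p.1).testBit p.2).toNat

def truncM {ρ κ : Type*} (ℓ : ℕ) (M : Matrix ρ κ ℕ) : Matrix ρ κ ℕ :=
  M.map (· % 2 ^ ℓ)

lemma sum_testBit (x ℓ : ℕ) :
    ∑ j ∈ Finset.range ℓ, ((x.testBit j).toNat * 2 ^ j) = x % 2 ^ ℓ := by
  induction ℓ with
  | zero => simp [Nat.mod_one]
  | succ k ih =>
    rw [Finset.sum_range_succ, ih, Nat.testBit_eq_decide_div_mod_eq, pow_succ, Nat.mod_mul]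
    rcases Nat.mod_two_eq_zero_or_one (x / 2 ^ k) with h | h <;> simp [h, Nat.mul_comm]

lemma bitDecomp_mul_gadget {ρ : Type*} [Fintype ρ] (n ℓ : ℕ) (a : Matrix ρ (Fin n) ℕ) :
    bitDecomp n ℓ a * gadget ℕ n ℓ = truncM ℓ a := by
  ext r k
  simp only [truncM, Matrix.map_apply, Matrix.mul_apply, bitDecomp, gadget]
  rw [Fintype.sum_prod_type]
  rw [Finset.sum_eq_single k]
  · rw [← sum_testBit (a r k) ℓ]
    simp [Fin.sum_univ_eq_sum_range (fun j => ((a r k).testBit j).toNat * 2 ^ j)]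
  · intro i _ hik
    simp [hik]
  · simp

theorem reduced_cipher_encryption (n ℓ m : ℕ) (μ : ℕ)
    (A : Matrix (Fin m) (Fin (n + 1)) ℕ)
    (R : Matrix (Fin (n + 1) × Fin ℓ) (Fin m) ℕ)
    (hR : ∀ p q, R p q ≤ 1) :
    (bitDecomp (n + 1) ℓ
        ((μ • (1 : Matrix (Fin (n + 1) × Fin ℓ) (Fin (n + 1) × Fin ℓ) ℕ) +
            bitDecomp (n + 1) ℓ (R * A)) * gadget ℕ (n + 1) ℓ)) * gadget ℕ (n + 1) ℓ =
      truncM ℓ (μ • gadget ℕ (n + 1) ℓ + R * A) := by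
  rw [bitDecomp_mul_gadget, Matrix.add_mul, bitDecomp_mul_gadget, Matrix.smul_mul, Matrix.one_mul]
  ext r k
  simp only [truncM, Matrix.map_apply, Matrix.add_apply]
  rw [Nat.add_mod, Nat.mod_mod_of_dvd _ (dvd_refl _), ← Nat.add_mod]
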